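/- Let p ≥ 2, θ ≥ 1, and φ as in problem (P). The function φ is oscillatory: for every r > 0 there exists t > r with φ(t) = 0. -/

import Mathlib

/-!
If a solution `ψ` stayed positive on `[r₀, ∞)`, its Riccati variable
`w = r^(θ-1) |ψ'|^(p-2) ψ' / ψ^(p-1)` would satisfy `w' = -r^(θ-1) - (p-1) w ψ'/ψ` with
`w ψ'/ψ ≥ 0`, hence `w ≤ C - r^θ/θ`. Once `w < 0`, the last term equals
`(p-1) (-w)^(1 + 1/(p-1)) / r^((θ-1)/(p-1))`, and for `R` large this Riccati inequality makes
`w` blow up before `R + 1`. So every solution becomes nonpositive, and by the intermediate value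
theorem (and the symmetry `ψ ↦ -ψ`) it vanishes beyond any radius.
-/

open Real Set

theorem Convex.antitoneOn_of_hasDerivAt_nonpos {D : Set ℝ} (hD : Convex ℝ D) {f f' : ℝ → ℝ}
    (hf : ∀ x ∈ D, HasDerivAt f (f' x) x) (hf' : ∀ x ∈ D, f' x ≤ 0) : AntitoneOn f D :=
  antitoneOn_of_hasDerivWithinAt_nonpos hD
    (fun x hx => (hf x hx).continuousAt.continuousWithinAt)
    (fun x hx => (hf x (interior_subset hx)).hasDerivWithinAt)
    (fun x hx => hf' x (interior_subset hx))

/-- `(-w)^(1-q)` decreases at rate at least `(q - 1) k` while staying positive. -/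
theorem mul_sub_lt_rpow_one_sub_of_deriv_le {w w' : ℝ → ℝ} {a b k q : ℝ} (hab : a ≤ b)
    (hq : 1 < q) (hw : ∀ x ∈ Icc a b, HasDerivAt w (w' x) x) (hneg : ∀ x ∈ Icc a b, w x < 0)
    (hw' : ∀ x ∈ Icc a b, w' x ≤ -(k * (-w x) ^ q)) :
    (q - 1) * k * (b - a) < (-w a) ^ (1 - q) := by
  have hanti : AntitoneOn (fun x => (-w x) ^ (1 - q) + (q - 1) * k * x) (Icc a b) := by
    refine (convex_Icc a b).antitoneOn_of_hasDerivAt_nonpos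
      (f' := fun x => -w' x * (1 - q) * (-w x) ^ (1 - q - 1) + (q - 1) * k)
      (fun x hx => ?_) (fun x hx => ?_)
    · exact (((hw x hx).neg).rpow_const (Or.inl (neg_ne_zero.2 (hneg x hx).ne))).add
        ((hasDerivAt_id x).const_mul _ |>.congr_deriv (mul_one _))
    · have hpos : 0 < -w x := neg_pos.2 (hneg x hx)
      have hcancel : (-w x) ^ q * (-w x) ^ (1 - q - 1) = 1 := by
        rw [← rpow_add hpos, show q + (1 - q - 1) = 0 by ring, rpow_zero]
      have := mul_le_mul_of_nonneg_left (hw' x hx)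
        (mul_nonneg (sub_nonneg.2 hq.le) (rpow_pos_of_pos hpos (1 - q - 1)).le)
      linear_combination this - (q - 1) * k * hcancel
  have hend := hanti ⟨le_rfl, hab⟩ ⟨hab, le_rfl⟩ hab
  have hpos : 0 < (-w b) ^ (1 - q) := rpow_pos_of_pos (neg_pos.2 (hneg b ⟨hab, le_rfl⟩)) _
  simp only at hend
  nlinarith

theorem exists_add_rpow_le_rpow_div (K r₀ : ℝ) {θ : ℝ} (hθ : 1 ≤ θ) :
    ∃ R, r₀ ≤ R ∧ K + (R + 1) ^ (θ - 1) ≤ R ^ θ / θ := by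
  set R := max (max r₀ 1) (θ * (2 ^ (θ - 1) + |K|))
  have hR1 : 1 ≤ R := (le_max_right _ _).trans (le_max_left _ _)
  have hRθ : 2 ^ (θ - 1) + |K| ≤ R / θ := by
    rw [le_div_iff₀ (by linarith), mul_comm]
    exact le_max_right _ _
  have hpow1 : 1 ≤ R ^ (θ - 1) := one_le_rpow hR1 (by linarith)
  have hshift : (R + 1) ^ (θ - 1) ≤ 2 ^ (θ - 1) * R ^ (θ - 1) := by
    rw [← mul_rpow zero_le_two (by linarith)]
    exact rpow_le_rpow (by linarith) (by linarith) (by linarith)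
  have hsplit : R ^ θ / θ = R ^ (θ - 1) * (R / θ) := by
    rw [← mul_div_assoc, ← rpow_add_one (by linarith), sub_add_cancel]
  refine ⟨R, (le_max_left _ _).trans (le_max_left _ _), ?_⟩
  rw [hsplit]
  nlinarith [le_abs_self K, abs_nonneg K,
    mul_le_mul_of_nonneg_left hRθ (by linarith : 0 ≤ R ^ (θ - 1))]

theorem rpow_inv_mul_rpow_div_rpow {A s P m : ℝ} (hA : 0 ≤ A) (hs : 0 ≤ s) (hP : 0 ≤ P)
    (hm : m ≠ 0) : (A * s ^ m / P ^ m) ^ m⁻¹ = A ^ m⁻¹ * s / P := by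
  rw [div_rpow (by positivity) (by positivity), mul_rpow hA (by positivity),
    rpow_rpow_inv hs hm, rpow_rpow_inv hP hm]

/-- The odd power `x ↦ sgn x * |x| ^ (p - 1)` of the `p`-Laplacian. -/
noncomputable def signedPow (p x : ℝ) : ℝ := |x| ^ (p - 2) * x

theorem signedPow_neg (p x : ℝ) : signedPow p (-x) = -signedPow p x := by
  simp only [signedPow, abs_neg, mul_neg]

theorem signedPow_of_pos {x : ℝ} (p : ℝ) (hx : 0 < x) : signedPow p x = x ^ (p - 1) := by
  rw [signedPow, abs_of_pos hx, ← rpow_add_one hx.ne']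
  ring_nf

theorem signedPow_nonneg {x : ℝ} (p : ℝ) (hx : 0 ≤ x) : 0 ≤ signedPow p x :=
  mul_nonneg (rpow_nonneg (abs_nonneg x) _) hx

theorem mul_signedPow_nonneg (p x : ℝ) : 0 ≤ x * signedPow p x := by
  rw [signedPow, mul_left_comm]
  exact mul_nonneg (rpow_nonneg (abs_nonneg x) _) (mul_self_nonneg x)

structure IsRadialSolutionOn (p θ : ℝ) (ψ ψ' G' : ℝ → ℝ) (r₀ : ℝ) : Prop where
  hasDerivAt : ∀ r, r₀ ≤ r → HasDerivAt ψ (ψ' r) r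
  hasDerivAt_flux : ∀ r, r₀ ≤ r →
    HasDerivAt (fun t => t ^ (θ - 1) * signedPow p (ψ' t)) (G' r) r
  ode : ∀ r, r₀ ≤ r → G' r + r ^ (θ - 1) * signedPow p (ψ r) = 0

noncomputable def riccati (p θ : ℝ) (ψ ψ' : ℝ → ℝ) (r : ℝ) : ℝ :=
  r ^ (θ - 1) * signedPow p (ψ' r) / ψ r ^ (p - 1)

section Riccati

variable {p θ r : ℝ} {ψ ψ' : ℝ → ℝ}

theorem riccati_mul_div_nonneg (hr : 0 ≤ r) (hψ : 0 < ψ r) :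
    0 ≤ riccati p θ ψ ψ' r * ψ' r / ψ r := by
  have : riccati p θ ψ ψ' r * ψ' r / ψ r
      = r ^ (θ - 1) * (ψ' r * signedPow p (ψ' r)) / (ψ r ^ (p - 1) * ψ r) := by
    rw [riccati]; ring
  rw [this]
  have := mul_signedPow_nonneg p (ψ' r)
  positivity

theorem riccati_mul_div_eq_of_neg (hp : 1 < p) (hr : 0 < r) (hψ : 0 < ψ r)
    (hw : riccati p θ ψ ψ' r < 0) :
    riccati p θ ψ ψ' r * ψ' r / ψ r
      = (-riccati p θ ψ ψ' r) ^ (1 + (p - 1)⁻¹) / (r ^ (θ - 1)) ^ (p - 1)⁻¹ := by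
  have hψ' : ψ' r < 0 := by
    by_contra! h
    have := signedPow_nonneg p h
    have : 0 ≤ riccati p θ ψ ψ' r := by rw [riccati]; positivity
    linarith
  have hA : 0 < r ^ (θ - 1) := rpow_pos_of_pos hr _
  have hw_eq : -riccati p θ ψ ψ' r = r ^ (θ - 1) * (-ψ' r) ^ (p - 1) / ψ r ^ (p - 1) := by
    rw [riccati, ← neg_neg (ψ' r), signedPow_neg, signedPow_of_pos p (neg_pos.2 hψ'), neg_neg]
    ring
  have hroot :=
    rpow_inv_mul_rpow_div_rpow hA.le (neg_pos.2 hψ').le hψ.le (by linarith : p - 1 ≠ 0)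
  rw [← hw_eq] at hroot
  rw [rpow_add (neg_pos.2 hw), rpow_one, hroot]
  field_simp

theorem riccati_deriv_le_of_neg (hp : 1 < p) (hr : 0 < r) (hψ : 0 < ψ r)
    (hw : riccati p θ ψ ψ' r < 0) :
    -(r ^ (θ - 1)) - (p - 1) * (riccati p θ ψ ψ' r * ψ' r / ψ r)
      ≤ -((p - 1) / (r ^ (θ - 1)) ^ (p - 1)⁻¹ * (-riccati p θ ψ ψ' r) ^ (1 + (p - 1)⁻¹)) := by
  rw [riccati_mul_div_eq_of_neg hp hr hψ hw]
  have : 0 ≤ r ^ (θ - 1) := by positivity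
  have : (p - 1) * ((-riccati p θ ψ ψ' r) ^ (1 + (p - 1)⁻¹) / (r ^ (θ - 1)) ^ (p - 1)⁻¹)
      = (p - 1) / (r ^ (θ - 1)) ^ (p - 1)⁻¹ * (-riccati p θ ψ ψ' r) ^ (1 + (p - 1)⁻¹) := by
    ring
  linarith

end Riccati

namespace IsRadialSolutionOn

variable {p θ r₀ : ℝ} {ψ ψ' G' : ℝ → ℝ}

theorem neg (h : IsRadialSolutionOn p θ ψ ψ' G' r₀) :
    IsRadialSolutionOn p θ (-ψ) (-ψ') (-G') r₀ where
  hasDerivAt r hr := (h.hasDerivAt r hr).neg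
  hasDerivAt_flux r hr := by
    simpa only [Pi.neg_apply, signedPow_neg, mul_neg] using (h.hasDerivAt_flux r hr).fun_neg
  ode r hr := by
    simp only [Pi.neg_apply, signedPow_neg]
    linear_combination -h.ode r hr

theorem hasDerivAt_riccati {r : ℝ} (h : IsRadialSolutionOn p θ ψ ψ' G' r₀) (hr : r₀ ≤ r)
    (hψ : 0 < ψ r) :
    HasDerivAt (riccati p θ ψ ψ')
      (-(r ^ (θ - 1)) - (p - 1) * (riccati p θ ψ ψ' r * ψ' r / ψ r)) r := by
  have hden := (h.hasDerivAt r hr).rpow_const (p := p - 1) (Or.inl hψ.ne')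
  refine ((h.hasDerivAt_flux r hr).div hden (rpow_pos_of_pos hψ _).ne').congr_deriv ?_
  have hG := h.ode r hr
  rw [signedPow_of_pos p hψ] at hG
  have hpow : ψ r ^ (p - 1 - 1) = ψ r ^ (p - 1) / ψ r := by
    rw [eq_div_iff hψ.ne', ← rpow_add_one hψ.ne', sub_add_cancel]
  rw [riccati, hpow, show G' r = -(r ^ (θ - 1) * ψ r ^ (p - 1)) by linarith]
  have := (rpow_pos_of_pos hψ (p - 1)).ne'
  field_simp

theorem exists_nonpos (h : IsRadialSolutionOn p θ ψ ψ' G' r₀) (hp : 1 < p) (hθ : 1 ≤ θ)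
    (hr₀ : 0 < r₀) : ∃ r, r₀ ≤ r ∧ ψ r ≤ 0 := by
  by_contra! hpos
  have hw r (hr : r₀ ≤ r) := h.hasDerivAt_riccati hr (hpos r hr)
  have hw_nonneg r (hr : r₀ ≤ r) :=
    riccati_mul_div_nonneg (p := p) (θ := θ) (ψ' := ψ') (hr₀.le.trans hr) (hpos r hr)
  have hw_ric r (hr : r₀ ≤ r) :=
    riccati_deriv_le_of_neg (θ := θ) (ψ' := ψ') hp (hr₀.trans_le hr) (hpos r hr)
  set m := p - 1
  set w := riccati p θ ψ ψ'
  have hm : 0 < m := by linarith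
  have hdecay : ∀ r, r₀ ≤ r → w r ≤ w r₀ + r₀ ^ θ / θ - r ^ θ / θ := by
    have hanti : AntitoneOn (fun r => w r + r ^ θ / θ) (Ici r₀) := by
      refine (convex_Ici r₀).antitoneOn_of_hasDerivAt_nonpos
        (f' := fun r => -(r ^ (θ - 1)) - m * (w r * ψ' r / ψ r) + r ^ (θ - 1))
        (fun r hr => (hw r hr).add ?_) (fun r hr => ?_)
      · simpa [mul_div_cancel_left₀ _ (by linarith : θ ≠ 0)] using
          (hasDerivAt_rpow_const (p := θ) (Or.inr hθ)).div_const θ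
      · nlinarith [hw_nonneg r hr]
    intro r hr
    have := hanti (mem_Ici.2 le_rfl) hr hr
    simp only at this
    linarith
  obtain ⟨R, hR, hRgrowth⟩ := exists_add_rpow_le_rpow_div (w r₀ + r₀ ^ θ / θ) r₀ hθ
  have hRpos : 0 < R := hr₀.trans_le hR
  set X := (R + 1) ^ (θ - 1)
  have hX : 0 < X := rpow_pos_of_pos (by linarith) _
  have hwX : ∀ x ∈ Icc R (R + 1), w x ≤ -X := by
    intro x hx
    have := hdecay x (hR.trans hx.1)
    have := div_le_div_of_nonneg_right (rpow_le_rpow hRpos.le hx.1 (by linarith : 0 ≤ θ))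
      (by linarith : 0 ≤ θ)
    linarith
  have hwneg x (hx : x ∈ Icc R (R + 1)) : w x < 0 := (hwX x hx).trans_lt (by linarith)
  set k := m / X ^ m⁻¹ with hk_def
  have hric : ∀ x ∈ Icc R (R + 1), -(x ^ (θ - 1)) - m * (w x * ψ' x / ψ x)
      ≤ -(k * (-w x) ^ (1 + m⁻¹)) := by
    intro x hx
    have hx0 : 0 < x := hRpos.trans_le hx.1
    have hk : k ≤ m / (x ^ (θ - 1)) ^ m⁻¹ :=
      div_le_div_of_nonneg_left hm.le (rpow_pos_of_pos (rpow_pos_of_pos hx0 _) _)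
        (rpow_le_rpow (by positivity) (rpow_le_rpow hx0.le hx.2 (by linarith)) (by positivity))
    have := mul_le_mul_of_nonneg_right hk
      (rpow_nonneg (neg_nonneg.2 (hwneg x hx).le) (1 + m⁻¹))
    linarith [hw_ric x (hR.trans hx.1) (hwneg x hx)]
  have hblow := mul_sub_lt_rpow_one_sub_of_deriv_le (by linarith) (by simpa using hm)
    (fun x hx => hw x (hR.trans hx.1)) hwneg hric
  have hend : (-w R) ^ (-m⁻¹) ≤ X ^ (-m⁻¹) :=
    rpow_le_rpow_of_nonpos (x := X) (y := -w R) hX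
      (by linarith [hwX R ⟨le_rfl, by linarith⟩]) (by simpa using hm.le)
  have hlhs : (1 + m⁻¹ - 1) * k * (R + 1 - R) = X ^ (-m⁻¹) := by
    rw [hk_def, rpow_neg hX.le, add_sub_cancel_left, add_sub_cancel_left]
    field_simp
  rw [hlhs, show 1 - (1 + m⁻¹) = -m⁻¹ by ring] at hblow
  linarith

theorem exists_zero_of_pos (h : IsRadialSolutionOn p θ ψ ψ' G' r₀) (hp : 1 < p) (hθ : 1 ≤ θ)
    (hr₀ : 0 < r₀) (hψ : 0 < ψ r₀) : ∃ t, r₀ ≤ t ∧ ψ t = 0 := by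
  obtain ⟨r, hr, hψr⟩ := h.exists_nonpos hp hθ hr₀
  have hcont : ContinuousOn ψ (Icc r₀ r) :=
    fun x hx => (h.hasDerivAt x hx.1).continuousAt.continuousWithinAt
  obtain ⟨t, ht, hψt⟩ := intermediate_value_Icc' hr hcont ⟨hψr, hψ.le⟩
  exact ⟨t, ht.1, hψt⟩

theorem exists_zero (h : IsRadialSolutionOn p θ ψ ψ' G' r₀) (hp : 1 < p) (hθ : 1 ≤ θ)
    (hr₀ : 0 < r₀) : ∃ t, r₀ ≤ t ∧ ψ t = 0 := by
  rcases lt_trichotomy (ψ r₀) 0 with hneg | hzero | hpos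
  · simpa using h.neg.exists_zero_of_pos hp hθ hr₀ (by simpa using hneg)
  · exact ⟨r₀, le_rfl, hzero⟩
  · exact h.exists_zero_of_pos hp hθ hr₀ hpos

end IsRadialSolutionOn

theorem stmt_16_general (p θ : ℝ) (hp : 2 ≤ p) (hθ : 1 ≤ θ) (φ φ' g' : ℝ → ℝ)
    (hφ : ∀ r, 0 ≤ r → HasDerivAt φ (φ' r) r)
    (hg : ∀ r, 0 ≤ r →
      HasDerivAt (fun t => t ^ (θ - 1) * (|φ' t| ^ (p - 2) * φ' t)) (g' r) r)
    (hode : ∀ r, 0 ≤ r → g' r + r ^ (θ - 1) * (|φ r| ^ (p - 2) * φ r) = 0) :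
    ∀ r, 0 < r → ∃ t, r < t ∧ φ t = 0 := by
  intro r hr
  have hsol : IsRadialSolutionOn p θ φ φ' g' (r + 1) :=
    ⟨fun s hs => hφ s (by linarith), fun s hs => hg s (by linarith),
      fun s hs => hode s (by linarith)⟩
  obtain ⟨t, ht, hφt⟩ := hsol.exists_zero (by linarith) hθ (by linarith)
  exact ⟨t, by linarith, hφt⟩

/-- The solution `φ` of `(r^(θ-1)|φ'|^(p-2) φ')' + r^(θ-1)|φ|^(p-2) φ = 0`, `φ(0)=1`,
`φ'(0)=0` is oscillatory: for every `r > 0` there is `t > r` with `φ(t) = 0`. -/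
theorem stmt_16 (p θ : ℝ) (hp : 2 ≤ p) (hθ : 1 ≤ θ) (φ φ' g' : ℝ → ℝ)
    (hφ : ∀ r, 0 ≤ r → HasDerivAt φ (φ' r) r)
    (hφ'cont : ContinuousOn φ' (Set.Ici 0))
    (hg : ∀ r, 0 ≤ r →
      HasDerivAt (fun t => t ^ (θ - 1) * (|φ' t| ^ (p - 2) * φ' t)) (g' r) r)
    (hg'cont : ContinuousOn g' (Set.Ici 0))
    (hode : ∀ r, 0 ≤ r → g' r + r ^ (θ - 1) * (|φ r| ^ (p - 2) * φ r) = 0)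
    (h0 : φ 0 = 1) (h0' : φ' 0 = 0) :
    ∀ r, 0 < r → ∃ t, r < t ∧ φ t = 0 :=
  stmt_16_general p θ hp hθ φ φ' g' hφ hg hode
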